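/- Let D be the harmonic frame with N = n+L and Ls ≤ N/4. Then the localization factor satisfies η_{s,D} ≤ 1 + L√2. -/

import Mathlib

open Finset Matrix

noncomputable def l2norm {ι : Type*} [Fintype ι] (v : ι → ℂ) : ℝ :=
  Real.sqrt (∑ i, ‖v i‖ ^ 2)

noncomputable def l1norm {ι : Type*} [Fintype ι] (v : ι → ℂ) : ℝ :=
  ∑ i, ‖v i‖

open Classical in
noncomputable def sparsity {ι : Type*} [Fintype ι] (v : ι → ℂ) : ℕ :=
  (Finset.univ.filter fun i => v i ≠ 0).card

noncomputable def harmonicFrame (n L : ℕ) : Matrix (Fin n) (Fin (n + L)) ℂ :=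
  fun j k => (1 / (Real.sqrt (n + L) : ℝ)) *
    Complex.exp (2 * Real.pi * Complex.I * ((j : ℕ) : ℂ) * ((k : ℕ) : ℂ) / ((n + L : ℕ) : ℂ))

/-! The Gram matrix `G = Dᴴ D` of the harmonic frame is `(n/N) I + E` with `|E_kl| ≤ L/N`: off
the diagonal its entries are partial geometric sums `∑_{j<n} ω^j` of an `N`-th root of unity
`ω ≠ 1`, which equal minus the remaining `L` terms. Since `Re ⟨z, Gz⟩ = ‖Dz‖₂² = 1`, an `s`-sparse
`z` satisfies `(n/N)‖z‖₂² ≤ 1 + (L/N)‖z‖₁² ≤ 1 + (Ls/N)‖z‖₂²`, whence `‖z‖₂² ≤ 2` when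
`Ls ≤ N/4`. As `D Dᴴ = I`, also `‖Gz‖₂ = 1`, so `Gz` has `ℓ¹`-mass at most `√s` on the support of
`z`; off the support `(Gz)_k = (Ez)_k`, and these `N` entries contribute at most
`N (L/N) ‖z‖₁ ≤ L √(2s)`. -/

lemma l2norm_nonneg {ι : Type*} [Fintype ι] (v : ι → ℂ) : 0 ≤ l2norm v := Real.sqrt_nonneg _

lemma sq_l2norm {ι : Type*} [Fintype ι] (v : ι → ℂ) : l2norm v ^ 2 = ∑ i, ‖v i‖ ^ 2 :=
  Real.sq_sqrt (by positivity)

lemma star_dotProduct_self {ι : Type*} [Fintype ι] (v : ι → ℂ) :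
    star v ⬝ᵥ v = ((l2norm v ^ 2 : ℝ) : ℂ) := by
  simp [dotProduct, sq_l2norm, Complex.conj_mul']

lemma sum_norm_le_sqrt_card_mul_l2norm {ι : Type*} [Fintype ι] (v : ι → ℂ) (T : Finset ι) :
    ∑ i ∈ T, ‖v i‖ ≤ √(#T : ℝ) * l2norm v := by
  rw [l2norm, ← Real.sqrt_mul (by positivity), Real.le_sqrt (by positivity) (by positivity)]
  calc (∑ i ∈ T, ‖v i‖) ^ 2 ≤ #T * ∑ i ∈ T, ‖v i‖ ^ 2 := sq_sum_le_card_mul_sum_sq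
    _ ≤ #T * ∑ i, ‖v i‖ ^ 2 := by gcongr; exact subset_univ T

open Classical in
lemma l1norm_le_sqrt_sparsity_mul_l2norm {ι : Type*} [Fintype ι] (v : ι → ℂ) :
    l1norm v ≤ √(sparsity v : ℝ) * l2norm v := by
  rw [l1norm, ← sum_filter_of_ne fun i _ h => norm_ne_zero_iff.mp h]
  exact sum_norm_le_sqrt_card_mul_l2norm v _

lemma norm_mulVec_apply_le {κ ι : Type*} [Fintype ι] {E : Matrix κ ι ℂ} {β : ℝ}
    (hE : ∀ k l, ‖E k l‖ ≤ β) (z : ι → ℂ) (k : κ) : ‖(E *ᵥ z) k‖ ≤ β * l1norm z := by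
  calc ‖∑ l, E k l * z l‖ ≤ ∑ l, ‖E k l * z l‖ := norm_sum_le _ _
    _ ≤ ∑ l, β * ‖z l‖ := by
      gcongr with l
      rw [norm_mul]
      exact mul_le_mul_of_nonneg_right (hE k l) (norm_nonneg _)
    _ = β * l1norm z := (mul_sum _ _ _).symm

lemma norm_star_dotProduct_mulVec_le {ι : Type*} [Fintype ι] {E : Matrix ι ι ℂ} {β : ℝ}
    (hE : ∀ k l, ‖E k l‖ ≤ β) (z : ι → ℂ) : ‖star z ⬝ᵥ (E *ᵥ z)‖ ≤ β * l1norm z ^ 2 := by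
  calc ‖∑ k, star (z k) * (E *ᵥ z) k‖ ≤ ∑ k, ‖star (z k) * (E *ᵥ z) k‖ := norm_sum_le _ _
    _ ≤ ∑ k, ‖z k‖ * (β * l1norm z) := by
      gcongr with k
      rw [norm_mul, norm_star]
      exact mul_le_mul_of_nonneg_left (norm_mulVec_apply_le hE z k) (norm_nonneg _)
    _ = β * l1norm z ^ 2 := by rw [← sum_mul, ← l1norm]; ring

lemma l1norm_le_sqrt_mul_l2norm_of_sparsity_le {ι : Type*} [Fintype ι] {s : ℕ} {z : ι → ℂ}
    (hz : sparsity z ≤ s) : l1norm z ≤ √(s : ℝ) * l2norm z :=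
  (l1norm_le_sqrt_sparsity_mul_l2norm z).trans <| by gcongr; exact l2norm_nonneg z

section Gram

variable {ι : Type*} [Fintype ι]

lemma l2norm_conjTranspose_mul_self_mulVec {m : Type*} [Fintype m] [DecidableEq m]
    {D : Matrix m ι ℂ} (hD : D * Dᴴ = 1) (z : ι → ℂ) :
    l2norm ((Dᴴ * D) *ᵥ z) = l2norm (D *ᵥ z) := by
  have h : star ((Dᴴ * D) *ᵥ z) ⬝ᵥ ((Dᴴ * D) *ᵥ z) = star (D *ᵥ z) ⬝ᵥ (D *ᵥ z) := by
    rw [← mulVec_mulVec, star_mulVec, conjTranspose_conjTranspose, ← dotProduct_mulVec,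
      mulVec_mulVec, hD, one_mulVec]
  rwa [star_dotProduct_self, star_dotProduct_self, Complex.ofReal_inj,
    sq_eq_sq₀ (l2norm_nonneg _) (l2norm_nonneg _)] at h

variable [DecidableEq ι] {α β : ℝ}

lemma mul_sq_l2norm_le {m : Type*} [Fintype m] (D : Matrix m ι ℂ)
    (hE : ∀ k l, ‖(Dᴴ * D - (α : ℂ) • (1 : Matrix ι ι ℂ)) k l‖ ≤ β) (z : ι → ℂ) :
    α * l2norm z ^ 2 ≤ l2norm (D *ᵥ z) ^ 2 + β * l1norm z ^ 2 := by
  have hq : ((l2norm (D *ᵥ z) ^ 2 : ℝ) : ℂ)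
      = (α * l2norm z ^ 2 : ℝ) + star z ⬝ᵥ ((Dᴴ * D - (α : ℂ) • 1) *ᵥ z) := by
    rw [sub_mulVec, dotProduct_sub, smul_mulVec, one_mulVec, dotProduct_smul,
      star_dotProduct_self, ← mulVec_mulVec, dotProduct_mulVec, ← star_mulVec,
      star_dotProduct_self]
    push_cast
    ring
  have hre := congrArg Complex.re hq
  simp only [Complex.ofReal_re, Complex.add_re] at hre
  have := (abs_le.mp ((Complex.abs_re_le_norm _).trans (norm_star_dotProduct_mulVec_le hE z))).1
  linarith

lemma l1norm_mulVec_le (G : Matrix ι ι ℂ) (hE : ∀ k l, ‖(G - (α : ℂ) • 1) k l‖ ≤ β)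
    (z : ι → ℂ) :
    l1norm (G *ᵥ z) ≤ √(sparsity z : ℝ) * l2norm (G *ᵥ z) + Fintype.card ι * (β * l1norm z) := by
  classical
  rw [l1norm, ← sum_filter_add_sum_filter_not univ (fun k => z k ≠ 0)]
  gcongr ?_ + ?_
  · exact sum_norm_le_sqrt_card_mul_l2norm _ _
  · calc ∑ k ∈ univ with ¬z k ≠ 0, ‖(G *ᵥ z) k‖
          = ∑ k ∈ univ with ¬z k ≠ 0, ‖((G - (α : ℂ) • 1) *ᵥ z) k‖ := by
          refine sum_congr rfl fun k hk => ?_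
          rw [sub_mulVec, smul_mulVec, one_mulVec, Pi.sub_apply, Pi.smul_apply,
            not_not.mp (mem_filter.mp hk).2, smul_zero, sub_zero]
      _ ≤ ∑ k, ‖((G - (α : ℂ) • 1) *ᵥ z) k‖ :=
          sum_le_sum_of_subset_of_nonneg (subset_univ _) fun _ _ _ => norm_nonneg _
      _ ≤ ∑ _k : ι, β * l1norm z := sum_le_sum fun k _ => norm_mulVec_apply_le hE z k
      _ = Fintype.card ι * (β * l1norm z) := by simp

end Gram

lemma norm_geom_sum_le_of_pow_eq_one {ω : ℂ} {n L : ℕ} (hω : ω ^ (n + L) = 1) (hω1 : ω ≠ 1) :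
    ‖∑ j ∈ range n, ω ^ j‖ ≤ L := by
  rcases Nat.eq_zero_or_pos (n + L) with hN | hN
  · simp [show n = 0 by omega]
  have hsplit : ∑ j ∈ range n, ω ^ j + ∑ i ∈ range L, ω ^ (n + i) = 0 := by
    rw [← sum_range_add, geom_sum_eq hω1, hω, sub_self, zero_div]
  have hnorm : ‖ω‖ = 1 := Complex.norm_eq_one_of_pow_eq_one hω hN.ne'
  calc ‖∑ j ∈ range n, ω ^ j‖ = ‖∑ i ∈ range L, ω ^ (n + i)‖ := by
        rw [eq_neg_of_add_eq_zero_left hsplit, norm_neg]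
    _ ≤ ∑ i ∈ range L, ‖ω ^ (n + i)‖ := norm_sum_le _ _
    _ = L := by simp [hnorm]

lemma IsPrimitiveRoot.star_pow_mul_pow_pow_eq_one {ζ : ℂ} {N : ℕ} (h : IsPrimitiveRoot ζ N)
    (a b : ℕ) : (star (ζ ^ a) * ζ ^ b) ^ N = 1 := by
  rw [mul_pow, ← star_pow, ← pow_mul, ← pow_mul, mul_comm a, mul_comm b, pow_mul, pow_mul,
    h.pow_eq_one]
  simp

lemma IsPrimitiveRoot.star_pow_mul_pow_eq_one_iff {ζ : ℂ} {N a b : ℕ} (h : IsPrimitiveRoot ζ N)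
    (ha : a < N) (hb : b < N) : star (ζ ^ a) * ζ ^ b = 1 ↔ a = b := by
  have hunit : star (ζ ^ a) * ζ ^ a = 1 := by
    rw [Complex.star_def, Complex.conj_mul', norm_pow, h.norm'_eq_one (by omega)]
    simp
  refine ⟨fun hab => h.pow_inj ha hb ?_, fun hab => hab ▸ hunit⟩
  calc ζ ^ a = ζ ^ a * (star (ζ ^ a) * ζ ^ b) := by rw [hab, mul_one]
    _ = (star (ζ ^ a) * ζ ^ a) * ζ ^ b := by ring
    _ = ζ ^ b := by rw [hunit, one_mul]

noncomputable def harmonicRoot (N : ℕ) : ℂ := Complex.exp (2 * Real.pi * Complex.I / N)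

lemma isPrimitiveRoot_harmonicRoot {N : ℕ} (hN : N ≠ 0) : IsPrimitiveRoot (harmonicRoot N) N :=
  Complex.isPrimitiveRoot_exp N hN

lemma ofReal_inv_sqrt_sq (N : ℕ) : (((√(N : ℝ))⁻¹ : ℝ) : ℂ) ^ 2 = (N : ℂ)⁻¹ := by
  rw [← Complex.ofReal_pow, inv_pow, Real.sq_sqrt (Nat.cast_nonneg N)]
  push_cast
  rfl

section HarmonicFrame

variable {n L : ℕ}

lemma harmonicFrame_apply (j : Fin n) (k : Fin (n + L)) :
    harmonicFrame n L j k
      = ((√((n + L : ℕ) : ℝ))⁻¹ : ℝ) * harmonicRoot (n + L) ^ ((j : ℕ) * k) := by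
  rw [harmonicFrame, harmonicRoot, ← Complex.exp_nat_mul]
  push_cast
  ring_nf

lemma conjTranspose_mul_harmonicFrame_apply (k l : Fin (n + L)) :
    ((harmonicFrame n L)ᴴ * harmonicFrame n L) k l = ((n + L : ℕ) : ℂ)⁻¹
      * ∑ j ∈ range n,
          (star (harmonicRoot (n + L) ^ (k : ℕ)) * harmonicRoot (n + L) ^ (l : ℕ)) ^ j := by
  rw [mul_apply, mul_sum, ← Fin.sum_univ_eq_sum_range]
  refine sum_congr rfl fun j _ => ?_
  simp only [conjTranspose_apply, harmonicFrame_apply, star_mul', star_pow, Complex.star_def,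
    Complex.conj_ofReal, ← ofReal_inv_sqrt_sq]
  ring

lemma harmonicFrame_mul_conjTranspose_apply (j j' : Fin n) :
    (harmonicFrame n L * (harmonicFrame n L)ᴴ) j j' = ((n + L : ℕ) : ℂ)⁻¹
      * ∑ k ∈ range (n + L),
          (star (harmonicRoot (n + L) ^ (j' : ℕ)) * harmonicRoot (n + L) ^ (j : ℕ)) ^ k := by
  rw [mul_apply, mul_sum, ← Fin.sum_univ_eq_sum_range]
  refine sum_congr rfl fun k _ => ?_
  simp only [conjTranspose_apply, harmonicFrame_apply, star_mul', star_pow, Complex.star_def,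
    Complex.conj_ofReal, ← ofReal_inv_sqrt_sq]
  ring

lemma harmonicFrame_mul_conjTranspose : harmonicFrame n L * (harmonicFrame n L)ᴴ = 1 := by
  ext j j'
  have hN : n + L ≠ 0 := by have := j.pos; omega
  have hζ := isPrimitiveRoot_harmonicRoot hN
  have hlt (i : Fin n) : (i : ℕ) < n + L := by omega
  rw [harmonicFrame_mul_conjTranspose_apply]
  by_cases h : j = j'
  · rw [h, (hζ.star_pow_mul_pow_eq_one_iff (hlt j') (hlt j')).2 rfl, one_apply_eq]
    simp only [one_pow, sum_const, card_range, nsmul_eq_mul, mul_one]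
    exact inv_mul_cancel₀ (Nat.cast_ne_zero.mpr hN)
  · have hω1 :=
      mt (hζ.star_pow_mul_pow_eq_one_iff (hlt j') (hlt j)).1 (Fin.val_ne_of_ne (Ne.symm h))
    rw [geom_sum_eq hω1, hζ.star_pow_mul_pow_pow_eq_one, sub_self, zero_div, mul_zero,
      one_apply_ne h]

lemma norm_conjTranspose_mul_harmonicFrame_sub_le (k l : Fin (n + L)) :
    ‖((harmonicFrame n L)ᴴ * harmonicFrame n L
      - ((n / (n + L : ℕ) : ℝ) : ℂ) • (1 : Matrix (Fin (n + L)) (Fin (n + L)) ℂ)) k l‖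
      ≤ L / (n + L : ℕ) := by
  have hN : n + L ≠ 0 := by have := k.pos; omega
  have hζ := isPrimitiveRoot_harmonicRoot hN
  rw [Matrix.sub_apply, Matrix.smul_apply, conjTranspose_mul_harmonicFrame_apply]
  by_cases h : k = l
  · rw [h, (hζ.star_pow_mul_pow_eq_one_iff l.isLt l.isLt).2 rfl, one_apply_eq]
    simp only [one_pow, sum_const, card_range, nsmul_eq_mul, smul_eq_mul, mul_one]
    push_cast
    rw [div_eq_inv_mul, sub_self, norm_zero]
    positivity
  · have hω1 := mt (hζ.star_pow_mul_pow_eq_one_iff k.isLt l.isLt).1 (Fin.val_ne_of_ne h)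
    rw [one_apply_ne h, smul_zero, sub_zero, norm_mul, norm_inv, Complex.norm_natCast,
      div_eq_inv_mul]
    gcongr
    exact norm_geom_sum_le_of_pow_eq_one (hζ.star_pow_mul_pow_pow_eq_one _ _) hω1

end HarmonicFrame

lemma l2norm_le_sqrt_two_of_harmonicFrame {n L s : ℕ} (hn : 0 < n) (hs : 1 ≤ s)
    (hLs : (L : ℝ) * s ≤ ((n + L : ℕ) : ℝ) / 4) {z : Fin (n + L) → ℂ} (hz : sparsity z ≤ s)
    (hDz : l2norm (harmonicFrame n L *ᵥ z) = 1) : l2norm z ≤ √2 := by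
  have hN : (0 : ℝ) < (n + L : ℕ) := by positivity
  have henergy := mul_sq_l2norm_le _ norm_conjTranspose_mul_harmonicFrame_sub_le z
  rw [hDz, one_pow] at henergy
  have hl1 : l1norm z ^ 2 ≤ s * l2norm z ^ 2 := by
    calc l1norm z ^ 2 ≤ (√(s : ℝ) * l2norm z) ^ 2 := by
          gcongr
          · exact sum_nonneg fun i _ => norm_nonneg _
          · exact l1norm_le_sqrt_mul_l2norm_of_sparsity_le hz
      _ = s * l2norm z ^ 2 := by rw [mul_pow, Real.sq_sqrt (Nat.cast_nonneg s)]
  have hsR : (1 : ℝ) ≤ s := by exact_mod_cast hs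
  have hLsZ : (L : ℝ) * l1norm z ^ 2 ≤ L * s * l2norm z ^ 2 := by
    rw [mul_assoc]; gcongr
  rw [div_mul_eq_mul_div, div_mul_eq_mul_div, div_le_iff₀ hN, add_mul,
    div_mul_cancel₀ _ hN.ne'] at henergy
  have hLR : (L : ℝ) ≤ L * s := le_mul_of_one_le_right (Nat.cast_nonneg L) hsR
  push_cast at hN hLs henergy
  have hgap : (0 : ℝ) ≤ n - L * s - (n + L) / 2 := by linarith
  have hZ : l2norm z ^ 2 ≤ 2 := by
    nlinarith [mul_nonneg hgap (sq_nonneg (l2norm z))]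
  rwa [Real.le_sqrt (l2norm_nonneg z) zero_le_two]

/-- For the harmonic frame with `N = n+L` and `Ls ≤ N/4`, the localization factor
`η_{s,D} = sup{‖DᴴDz‖₁/√s : ‖z‖₀ ≤ s, ‖Dz‖₂ = 1}` is at most `1 + L√2`. -/
theorem harmonicFrame_localization_factor (n L s : ℕ) (hn : 0 < n) (hs : 1 ≤ s)
    (hLs : ((L : ℝ) * s) ≤ ((n + L : ℕ) : ℝ) / 4) :
    sSup {t : ℝ | ∃ z : Fin (n + L) → ℂ, sparsity z ≤ s ∧
        l2norm ((harmonicFrame n L).mulVec z) = 1 ∧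
        t = l1norm ((((harmonicFrame n L).conjTranspose * harmonicFrame n L)).mulVec z)
              / Real.sqrt s}
      ≤ 1 + (L : ℝ) * Real.sqrt 2 := by
  refine Real.sSup_le ?_ (by positivity)
  rintro _ ⟨z, hz, hDz, rfl⟩
  have hz1 : l1norm z ≤ √(s : ℝ) * √2 :=
    (l1norm_le_sqrt_mul_l2norm_of_sparsity_le hz).trans <| by
      gcongr; exact l2norm_le_sqrt_two_of_harmonicFrame hn hs hLs hz hDz
  have hGz := l1norm_mulVec_le _ norm_conjTranspose_mul_harmonicFrame_sub_le z
  rw [l2norm_conjTranspose_mul_self_mulVec harmonicFrame_mul_conjTranspose, hDz, mul_one,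
    Fintype.card_fin, ← mul_assoc, mul_div_cancel₀ _ (by positivity)] at hGz
  rw [div_le_iff₀ (by positivity)]
  calc l1norm _ ≤ √(sparsity z : ℝ) + L * l1norm z := hGz
    _ ≤ √(s : ℝ) + L * (√(s : ℝ) * √2) := by gcongr
    _ = (1 + L * √2) * √(s : ℝ) := by ring
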